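/- Conversely, MTZ constraints eliminate subtours: if x ∈ {0,1}^{(m+1)×(m+1)} satisfies the degree constraints (each vertex has exactly one outgoing and one incoming selected edge, no self-loops) and there exist reals u_1,...,u_m with u_i − u_j + m·x_{ij} ≤ m − 1 for all distinct i,j ∈ {1,...,m}, then the selected edges form a single directed cycle through all m+1 vertices (there is no directed cycle among the selected edges avoiding vertex 0). -/

import Mathlib

/-! A selected edge `i → j` between nonzero vertices forces `u i + 1 ≤ u j`, so `u` would
strictly increase all the way around a subtour avoiding `0`; at a vertex where `u` is maximal
this is impossible. -/

theorem Finite.not_forall_lt_comp {α β : Type*} [Finite α] [Nonempty α] [LinearOrder β]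
    (f : α → β) (g : α → α) : ¬ ∀ a, f a < f (g a) := by
  obtain ⟨a, ha⟩ := Finite.exists_max f
  exact fun h => (h a).not_ge (ha (g a))

theorem mtz_lt_of_selected {m : ℕ} {x : Fin (m + 1) → Fin (m + 1) → ℝ} {u : Fin (m + 1) → ℝ}
    (hloop : ∀ i, x i i = 0)
    (hmtz : ∀ i j : Fin (m + 1), i ≠ 0 → j ≠ 0 → i ≠ j →
      u i - u j + (m : ℝ) * x i j ≤ (m : ℝ) - 1)
    {i j : Fin (m + 1)} (hi : i ≠ 0) (hj : j ≠ 0) (hij : x i j = 1) : u i < u j := by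
  have hne : i ≠ j := by
    rintro rfl
    simp [hloop] at hij
  have := hmtz i j hi hj hne
  rw [hij] at this
  linarith

theorem mtz_eliminates_subtours_general (m : ℕ) (x : Fin (m + 1) → Fin (m + 1) → ℝ)
    (hloop : ∀ i, x i i = 0)
    (u : Fin (m + 1) → ℝ)
    (hmtz : ∀ i j : Fin (m + 1), i ≠ 0 → j ≠ 0 → i ≠ j →
      u i - u j + (m : ℝ) * x i j ≤ (m : ℝ) - 1) :
    ¬ ∃ (k : ℕ) (c : Fin (k + 1) → Fin (m + 1)),
        Function.Injective c ∧ (∀ t, c t ≠ 0) ∧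
        (∀ t : Fin (k + 1), x (c t) (c (t + 1)) = 1) := by
  rintro ⟨k, c, -, hne0, hsel⟩
  exact Finite.not_forall_lt_comp (u ∘ c) (· + 1)
    fun t => mtz_lt_of_selected hloop hmtz (hne0 t) (hne0 (t + 1)) (hsel t)

/-- MTZ constraints eliminate subtours.  If `x` is a binary
matrix on `{0,…,m}` satisfying the degree constraints (each vertex has exactly
one selected outgoing and one selected incoming edge, and no self-loops), and
there are reals `u_1,…,u_m` with `u i − u j + m·x i j ≤ m − 1` for all
distinct `i, j ≠ 0`, then there is no directed cycle among the selected edges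
avoiding vertex `0` (hence the selected edges form a single directed cycle
through all `m+1` vertices). -/
theorem mtz_eliminates_subtours (m : ℕ) (x : Fin (m + 1) → Fin (m + 1) → ℝ)
    (hbin : ∀ i j, x i j = 0 ∨ x i j = 1)
    (hout : ∀ i, ∑ j : Fin (m + 1), x i j = 1)
    (hin : ∀ i, ∑ j : Fin (m + 1), x j i = 1)
    (hloop : ∀ i, x i i = 0)
    (u : Fin (m + 1) → ℝ)
    (hmtz : ∀ i j : Fin (m + 1), i ≠ 0 → j ≠ 0 → i ≠ j →
      u i - u j + (m : ℝ) * x i j ≤ (m : ℝ) - 1) :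
    ¬ ∃ (k : ℕ) (c : Fin (k + 1) → Fin (m + 1)),
        Function.Injective c ∧ (∀ t, c t ≠ 0) ∧
        (∀ t : Fin (k + 1), x (c t) (c (t + 1)) = 1) :=
  mtz_eliminates_subtours_general m x hloop u hmtz
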